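/- arXiv:2412.05270 — 2 statements merged into one kernel-verified Lean document; each statement's English description precedes it below -/
import Mathlib

section
/- Let r be a positive integer and let Z be a random variable with the chi-squared distribution with r degrees of freedom. Then for every ε ∈ (0,1), the tail bound Pr(|Z/r − 1| ≥ ε) ≤ 2·exp(−r·ε²/8) holds. -/
/-!
Chernoff's method. Tilting the Gamma(a, r) density by `exp (t x)` gives `(r / (r - t)) ^ a` times the
Gamma(a, r - t) density, so the moment generating function is `(r / (r - t)) ^ a` for `t < r`.
For the chi-squared law with `k` degrees of freedom and `s = ± ε`, the tilt `t = s / (2 (1 + s))`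
bounds the probability that `Z / k - 1` lies beyond `s` by `((1 + s) e^{-s}) ^ (k / 2)`, and
`(1 + s) e^{-s} ≤ e^{-s² / 4}` on `[-1, 1]`.
-/

open MeasureTheory ProbabilityTheory Real Set

section Gamma

variable {a r t : ℝ}

lemma gammaPDF_mul_exp (hr : 0 ≤ r) (ht : t < r) (x : ℝ) :
    gammaPDF a r x * ENNReal.ofReal (exp (t * x))
      = ENNReal.ofReal ((r / (r - t)) ^ a) * gammaPDF a (r - t) x := by
  have hrt : 0 < r - t := sub_pos.2 ht
  rcases lt_or_ge x 0 with hx | hx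
  · simp [gammaPDF_of_neg hx]
  · rw [gammaPDF_of_nonneg hx, gammaPDF_of_nonneg hx, ← ENNReal.ofReal_mul' (exp_pos _).le,
      ← ENNReal.ofReal_mul (by positivity), div_rpow hr hrt.le]
    congr 1
    have : (r - t) ^ a ≠ 0 := (rpow_pos_of_pos hrt a).ne'
    field_simp
    rw [mul_assoc, mul_assoc, ← exp_add]
    ring_nf

lemma measurable_gammaPDF (a r : ℝ) : Measurable (gammaPDF a r) :=
  (measurable_gammaPDFReal a r).ennreal_ofReal

lemma lintegral_exp_mul_gammaMeasure (ha : 0 < a) (hr : 0 ≤ r) (ht : t < r) :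
    ∫⁻ x, ENNReal.ofReal (exp (t * x)) ∂gammaMeasure a r = ENNReal.ofReal ((r / (r - t)) ^ a) := by
  rw [gammaMeasure, lintegral_withDensity_eq_lintegral_mul _ (measurable_gammaPDF a r) (by fun_prop)]
  simp_rw [Pi.mul_apply, gammaPDF_mul_exp hr ht]
  rw [lintegral_const_mul _ (measurable_gammaPDF a _),
    lintegral_gammaPDF_eq_one ha (sub_pos.2 ht), mul_one]

end Gamma

section Chernoff

variable {Ω : Type*} [MeasurableSpace Ω] {μ : Measure Ω}

lemma measure_ge_le_exp_neg_mul_lintegral_exp {X : Ω → ℝ} (hX : AEMeasurable X μ) (c : ℝ) :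
    μ {ω | c ≤ X ω} ≤ ENNReal.ofReal (exp (-c)) * ∫⁻ ω, ENNReal.ofReal (exp (X ω)) ∂μ := by
  have hset : {ω | c ≤ X ω} = {ω | ENNReal.ofReal (exp c) ≤ ENNReal.ofReal (exp (X ω))} := by
    ext ω
    simp [ENNReal.ofReal_le_ofReal_iff (exp_pos _).le]
  have hexp : ENNReal.ofReal (exp (-c)) * ENNReal.ofReal (exp c) = 1 := by
    rw [← ENNReal.ofReal_mul (exp_pos _).le, ← exp_add, neg_add_cancel, exp_zero, ENNReal.ofReal_one]
  calc μ {ω | c ≤ X ω}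
      = ENNReal.ofReal (exp (-c)) * (ENNReal.ofReal (exp c) * μ {ω | c ≤ X ω}) := by
        rw [← mul_assoc, hexp, one_mul]
    _ ≤ _ := by
        rw [hset]
        gcongr
        exact mul_meas_ge_le_lintegral₀ (by fun_prop) _

variable {a r t : ℝ} {Z : Ω → ℝ}

lemma measure_ge_mul_le_of_map_eq_gammaMeasure (hZ : AEMeasurable Z μ)
    (hlaw : μ.map Z = gammaMeasure a r) (ha : 0 < a) (hr : 0 ≤ r) (ht : t < r) (c : ℝ) :
    μ {ω | c ≤ t * Z ω} ≤ ENNReal.ofReal (exp (-c) * (r / (r - t)) ^ a) := by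
  have hmgf : ∫⁻ ω, ENNReal.ofReal (exp (t * Z ω)) ∂μ = ENNReal.ofReal ((r / (r - t)) ^ a) := by
    rw [← lintegral_exp_mul_gammaMeasure ha hr ht, ← hlaw,
      lintegral_map' (by fun_prop) hZ]
  rw [ENNReal.ofReal_mul (exp_pos _).le, ← hmgf]
  exact measure_ge_le_exp_neg_mul_lintegral_exp (hZ.const_mul t) c

end Chernoff

lemma one_add_le_exp_sub_sq_div_four {s : ℝ} (h₁ : -1 ≤ s) (h₂ : s ≤ 1) :
    1 + s ≤ exp (s - s ^ 2 / 4) := by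
  rcases le_or_gt 0 s with hs | hs
  · nlinarith [quadratic_le_exp_of_nonneg (x := s - s ^ 2 / 4) (by nlinarith)]
  · -- `exp y = exp (y / 2) ^ 2 ≥ (1 + y / 2) ^ 2` as long as `1 + y / 2 ≥ 0`.
    have hsq (y : ℝ) (hy : 0 ≤ 1 + y / 2) : (1 + y / 2) ^ 2 ≤ exp y := by
      rw [show exp y = exp (y / 2) ^ 2 by rw [← exp_nat_mul]; ring_nf]
      exact pow_le_pow_left₀ hy (by linarith [add_one_le_exp (y / 2)]) 2
    have hpoly : (1 + (s - s ^ 2 / 4) / 2) ^ 2 - (1 + s) = -s ^ 3 / 8 + s ^ 4 / 64 := by ring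
    nlinarith [hsq (s - s ^ 2 / 4) (by nlinarith), pow_pos (neg_pos.2 hs) 3, pow_two_nonneg (s ^ 2)]

lemma one_add_mul_exp_neg_le_exp_neg_sq_div_four {s : ℝ} (h₁ : -1 ≤ s) (h₂ : s ≤ 1) :
    (1 + s) * exp (-s) ≤ exp (-s ^ 2 / 4) :=
  calc (1 + s) * exp (-s) ≤ exp (s - s ^ 2 / 4) * exp (-s) :=
        mul_le_mul_of_nonneg_right (one_add_le_exp_sub_sq_div_four h₁ h₂) (exp_pos _).le
    _ = exp (-s ^ 2 / 4) := by rw [← exp_add]; ring_nf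

-- For `s > 0` the event is `s ≤ Z / k - 1`, for `s < 0` it is `Z / k - 1 ≤ s`: both tails at once.
lemma measure_sq_le_mul_div_sub_one_le_of_chiSquared {Ω : Type*} [MeasurableSpace Ω]
    {μ : Measure Ω} {Z : Ω → ℝ} {k s : ℝ} (hk : 0 < k) (hZ : AEMeasurable Z μ)
    (hlaw : μ.map Z = gammaMeasure (k / 2) (1 / 2)) (hs₁ : -1 < s) (hs₂ : s ≤ 1) :
    μ {ω | s ^ 2 ≤ s * (Z ω / k - 1)} ≤ ENNReal.ofReal (exp (-k * s ^ 2 / 8)) := by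
  have h1s : 0 < 1 + s := by linarith
  set t := s / (2 * (1 + s)) with ht
  have hsub : {ω | s ^ 2 ≤ s * (Z ω / k - 1)} ⊆ {ω | s * k / 2 ≤ t * Z ω} := by
    intro ω (hω : s ^ 2 ≤ s * (Z ω / k - 1))
    have hdiff : t * Z ω - s * k / 2 = k / (2 * (1 + s)) * (s * (Z ω / k - 1) - s ^ 2) := by
      rw [ht]; field_simp; ring
    have : 0 ≤ k / (2 * (1 + s)) * (s * (Z ω / k - 1) - s ^ 2) :=
      mul_nonneg (by positivity) (sub_nonneg.2 hω)
    show s * k / 2 ≤ t * Z ω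
    linarith
  have ht_lt : t < 1 / 2 := by
    rw [ht, div_lt_iff₀ (by positivity)]
    linarith
  have hratio : 1 / 2 / (1 / 2 - t) = 1 + s := by
    rw [ht]; field_simp; ring
  calc μ {ω | s ^ 2 ≤ s * (Z ω / k - 1)}
      ≤ μ {ω | s * k / 2 ≤ t * Z ω} := measure_mono hsub
    _ ≤ ENNReal.ofReal (exp (-(s * k / 2)) * (1 + s) ^ (k / 2)) := by
        simpa only [hratio] using measure_ge_mul_le_of_map_eq_gammaMeasure hZ hlaw
          (by positivity) (by norm_num) ht_lt (s * k / 2)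
    _ = ENNReal.ofReal (((1 + s) * exp (-s)) ^ (k / 2)) := by
        rw [mul_rpow h1s.le (exp_pos _).le, ← exp_mul, mul_comm]
        ring_nf
    _ ≤ ENNReal.ofReal (exp (-s ^ 2 / 4) ^ (k / 2)) :=
        ENNReal.ofReal_le_ofReal <| rpow_le_rpow (by positivity)
          (one_add_mul_exp_neg_le_exp_neg_sq_div_four hs₁.le hs₂) (by positivity)
    _ = ENNReal.ofReal (exp (-k * s ^ 2 / 8)) := by
        rw [← exp_mul]
        ring_nf

theorem apollo_stmt5_general {Ω : Type*} [MeasurableSpace Ω] (μ : Measure Ω)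
    (r : ℕ) (hr : 0 < r)
    (Z : Ω → ℝ) (hZmeas : Measurable Z)
    (hZlaw : μ.map Z = gammaMeasure ((r : ℝ) / 2) (1 / 2))
    (ε : ℝ) (hε : ε ∈ Set.Ioo (0 : ℝ) 1) :
    μ {ω | ε ≤ |Z ω / (r : ℝ) - 1|}
      ≤ ENNReal.ofReal (2 * Real.exp (-(r : ℝ) * ε ^ 2 / 8)) := by
  obtain ⟨hε₀, hε₁⟩ := hε
  have hk : (0 : ℝ) < r := Nat.cast_pos.2 hr
  have hsplit : {ω | ε ≤ |Z ω / r - 1|}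
      ⊆ {ω | ε ^ 2 ≤ ε * (Z ω / r - 1)} ∪ {ω | ε ^ 2 ≤ -ε * (Z ω / r - 1)} := by
    intro ω (hω : ε ≤ |Z ω / r - 1|)
    rcases le_abs'.1 hω with h | h
    · exact Or.inr (show ε ^ 2 ≤ -ε * (Z ω / r - 1) by nlinarith)
    · exact Or.inl (show ε ^ 2 ≤ ε * (Z ω / r - 1) by nlinarith)
  have upper := measure_sq_le_mul_div_sub_one_le_of_chiSquared hk hZmeas.aemeasurable hZlaw
    (by linarith) hε₁.le
  have lower := measure_sq_le_mul_div_sub_one_le_of_chiSquared (s := -ε) hk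
    hZmeas.aemeasurable hZlaw (by linarith) (by linarith)
  rw [neg_sq] at lower
  calc μ {ω | ε ≤ |Z ω / r - 1|}
      ≤ μ ({ω | ε ^ 2 ≤ ε * (Z ω / r - 1)} ∪ {ω | ε ^ 2 ≤ -ε * (Z ω / r - 1)}) :=
        measure_mono hsplit
    _ ≤ _ := measure_union_le _ _
    _ ≤ ENNReal.ofReal (exp (-r * ε ^ 2 / 8)) + ENNReal.ofReal (exp (-r * ε ^ 2 / 8)) :=
        add_le_add upper lower
    _ = ENNReal.ofReal (2 * exp (-r * ε ^ 2 / 8)) := by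
        rw [← ENNReal.ofReal_add (exp_pos _).le (exp_pos _).le, two_mul]

/-- Concentration of the chi-squared distribution with `r` degrees of freedom:
`Pr(|Z/r − 1| ≥ ε) ≤ 2 exp(−r ε²/8)`. -/
theorem apollo_stmt5 {Ω : Type*} [MeasurableSpace Ω] (μ : Measure Ω) [IsProbabilityMeasure μ]
    (r : ℕ) (hr : 0 < r)
    (Z : Ω → ℝ) (hZmeas : Measurable Z)
    (hZlaw : μ.map Z = gammaMeasure ((r : ℝ) / 2) (1 / 2))
    (ε : ℝ) (hε : ε ∈ Set.Ioo (0 : ℝ) 1) :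
    μ {ω | ε ≤ |Z ω / (r : ℝ) - 1|}
      ≤ ENNReal.ofReal (2 * Real.exp (-(r : ℝ) * ε ^ 2 / 8)) :=
  apollo_stmt5_general μ r hr Z hZmeas hZlaw ε hε
end

section
/- (Deterministic core of the main APOLLO ratio bound, AdamW case with channel-averaged variance) Let ε ∈ (0,1) and let n, m, r be positive integers. Let M, G ∈ ℝ^m be nonzero vectors, M^R, R ∈ ℝ^r be vectors, and let V ∈ ℝ^m, V^R ∈ ℝ^r be vectors with ‖V‖₁ > 0 and ‖V^R‖₁ > 0. Suppose (1−ε)·‖M‖² ≤ ‖M^R‖² ≤ (1+ε)·‖M‖², (1−ε)·‖V‖₁ ≤ ‖V^R‖₁ ≤ (1+ε)·‖V‖₁, and (1−ε)·‖G‖² ≤ ‖R‖² ≤ (1+ε)·‖G‖². Define the averaged-variance scaling factors s = (√n·‖M‖/√(‖V‖₁))/‖G‖ and s^R = (√r·‖M^R‖/√(‖V^R‖₁))/‖R‖. Then √(1−ε)/(1+ε) ≤ √(n/r)·(s^R/s) ≤ √(1+ε)/(1−ε). -/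
/-- Deterministic core of the main APOLLO ratio bound (AdamW case with
channel-averaged variance): under `(1±ε)` sandwiches on `‖M^R‖²`, `‖V^R‖₁`, `‖R‖²`,
the averaged-variance scaling factors satisfy
`√(1−ε)/(1+ε) ≤ √(n/r) · (s^R/s) ≤ √(1+ε)/(1−ε)`. -/
theorem apollo_stmt14 (n m r : ℕ) (hn : 0 < n) (hm : 0 < m) (hr : 0 < r)
    (ε : ℝ) (hε : ε ∈ Set.Ioo (0 : ℝ) 1)
    (M G : Fin m → ℝ) (MR R : Fin r → ℝ) (V : Fin m → ℝ) (VR : Fin r → ℝ)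
    (hM : M ≠ 0) (hG : G ≠ 0)
    (hV : 0 < ∑ i, |V i|) (hVR : 0 < ∑ i, |VR i|)
    (hMbound : (1 - ε) * (∑ i, (M i) ^ 2) ≤ ∑ i, (MR i) ^ 2 ∧
               ∑ i, (MR i) ^ 2 ≤ (1 + ε) * (∑ i, (M i) ^ 2))
    (hVbound : (1 - ε) * (∑ i, |V i|) ≤ ∑ i, |VR i| ∧
               ∑ i, |VR i| ≤ (1 + ε) * (∑ i, |V i|))
    (hGbound : (1 - ε) * (∑ i, (G i) ^ 2) ≤ ∑ i, (R i) ^ 2 ∧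
               ∑ i, (R i) ^ 2 ≤ (1 + ε) * (∑ i, (G i) ^ 2))
    (s sR : ℝ)
    (hs : s = Real.sqrt n * Real.sqrt (∑ i, (M i) ^ 2) / Real.sqrt (∑ i, |V i|)
            / Real.sqrt (∑ i, (G i) ^ 2))
    (hsR : sR = Real.sqrt r * Real.sqrt (∑ i, (MR i) ^ 2) / Real.sqrt (∑ i, |VR i|)
            / Real.sqrt (∑ i, (R i) ^ 2)) :
    Real.sqrt (1 - ε) / (1 + ε) ≤ Real.sqrt ((n : ℝ) / r) * (sR / s) ∧
    Real.sqrt ((n : ℝ) / r) * (sR / s) ≤ Real.sqrt (1 + ε) / (1 - ε) := by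
  obtain ⟨hε0, hε1⟩ := hε
  have h1e : (0:ℝ) < 1 - ε := by linarith
  have h2e : (0:ℝ) < 1 + ε := by linarith
  set a := ∑ i, (M i) ^ 2 with ha
  set g := ∑ i, (G i) ^ 2 with hg
  set aR := ∑ i, (MR i) ^ 2 with haR
  set gR := ∑ i, (R i) ^ 2 with hgR
  set v := ∑ i, |V i| with hv
  set vR := ∑ i, |VR i| with hvR
  have hapos : 0 < a := by
    obtain ⟨i, hi⟩ := Function.ne_iff.mp hM
    exact Finset.sum_pos' (fun j _ => sq_nonneg _) ⟨i, Finset.mem_univ i, pow_two_pos_of_ne_zero hi⟩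
  have hgpos : 0 < g := by
    obtain ⟨i, hi⟩ := Function.ne_iff.mp hG
    exact Finset.sum_pos' (fun j _ => sq_nonneg _) ⟨i, Finset.mem_univ i, pow_two_pos_of_ne_zero hi⟩
  have haRpos : 0 < aR := lt_of_lt_of_le (by positivity) hMbound.1
  have hgRpos : 0 < gR := lt_of_lt_of_le (by positivity) hGbound.1
  have sa := Real.sqrt_pos.mpr hapos
  have sg := Real.sqrt_pos.mpr hgpos
  have saR := Real.sqrt_pos.mpr haRpos
  have sgR := Real.sqrt_pos.mpr hgRpos
  have sv := Real.sqrt_pos.mpr hV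
  have svR := Real.sqrt_pos.mpr hVR
  have snp : (0:ℝ) < Real.sqrt n := Real.sqrt_pos.mpr (by exact_mod_cast hn)
  have srp : (0:ℝ) < Real.sqrt r := Real.sqrt_pos.mpr (by exact_mod_cast hr)
  have s1e := Real.sqrt_pos.mpr h1e
  have s2e := Real.sqrt_pos.mpr h2e
  have hE : Real.sqrt ((n : ℝ) / r) * (sR / s)
      = (Real.sqrt aR / Real.sqrt a) * (Real.sqrt v / Real.sqrt vR)
        * (Real.sqrt g / Real.sqrt gR) := by
    rw [hs, hsR, Real.sqrt_div (by positivity : (0:ℝ) ≤ (n:ℝ))]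
    field_simp
  rw [hE]
  have f1l : Real.sqrt (1 - ε) ≤ Real.sqrt aR / Real.sqrt a := by
    rw [le_div_iff₀ sa, ← Real.sqrt_mul h1e.le]
    exact Real.sqrt_le_sqrt hMbound.1
  have f1u : Real.sqrt aR / Real.sqrt a ≤ Real.sqrt (1 + ε) := by
    rw [div_le_iff₀ sa, ← Real.sqrt_mul h2e.le]
    exact Real.sqrt_le_sqrt hMbound.2
  have f2l : 1 / Real.sqrt (1 + ε) ≤ Real.sqrt v / Real.sqrt vR := by
    rw [div_le_div_iff₀ s2e svR, one_mul, mul_comm, ← Real.sqrt_mul h2e.le]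
    exact Real.sqrt_le_sqrt hVbound.2
  have f2u : Real.sqrt v / Real.sqrt vR ≤ 1 / Real.sqrt (1 - ε) := by
    rw [div_le_div_iff₀ svR s1e, one_mul, mul_comm, ← Real.sqrt_mul h1e.le]
    exact Real.sqrt_le_sqrt hVbound.1
  have f3l : 1 / Real.sqrt (1 + ε) ≤ Real.sqrt g / Real.sqrt gR := by
    rw [div_le_div_iff₀ s2e sgR, one_mul, mul_comm, ← Real.sqrt_mul h2e.le]
    exact Real.sqrt_le_sqrt hGbound.2
  have f3u : Real.sqrt g / Real.sqrt gR ≤ 1 / Real.sqrt (1 - ε) := by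
    rw [div_le_div_iff₀ sgR s1e, one_mul, mul_comm, ← Real.sqrt_mul h1e.le]
    exact Real.sqrt_le_sqrt hGbound.1
  have key2e : Real.sqrt (1 + ε) * Real.sqrt (1 + ε) = 1 + ε :=
    Real.mul_self_sqrt h2e.le
  have key1e : Real.sqrt (1 - ε) * Real.sqrt (1 - ε) = 1 - ε :=
    Real.mul_self_sqrt h1e.le
  constructor
  · have hlo : Real.sqrt (1 - ε) / (1 + ε)
        = Real.sqrt (1 - ε) * (1 / Real.sqrt (1 + ε)) * (1 / Real.sqrt (1 + ε)) := by
      rw [mul_assoc, div_mul_div_comm, one_mul, key2e, mul_one_div]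
    rw [hlo]
    have := mul_le_mul (mul_le_mul f1l f2l (by positivity) (by positivity)) f3l
      (by positivity) (by positivity)
    exact this
  · have hhi : Real.sqrt (1 + ε) / (1 - ε)
        = Real.sqrt (1 + ε) * (1 / Real.sqrt (1 - ε)) * (1 / Real.sqrt (1 - ε)) := by
      rw [mul_assoc, div_mul_div_comm, one_mul, key1e, mul_one_div]
    rw [hhi]
    exact mul_le_mul (mul_le_mul f1u f2u (by positivity) (by positivity)) f3u
      (by positivity) (by positivity)
end
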